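/- Let β > 0 and λ > 0. Define y : (0,∞) → ℝ by y(x) := √x · K(1/(β+2), (2√λ/(β+2))·x^((β+2)/2)), where K(ν,z) := ∫₀^∞ exp(−z·cosh t)·cosh(ν·t) dt. Then y is twice differentiable on (0,∞) and satisfies y″(x) = λ·x^β·y(x) for every x > 0. -/

import Mathlib

/-!
Differentiating under the integral sign, `K(ν, ·)` is smooth on `(0, ∞)` with
`(-1)ᵏ ∂ᵏK/∂zᵏ = ∫₀^∞ coshᵏ t · e^{-z cosh t} cosh (νt) dt`: the super-exponential decay of
`e^{-z cosh t}` dominates every such integrand, locally uniformly in `z > 0`. Since the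
combination `z² cosh² t - z cosh t - (z² + ν²)` of these integrands is the `t`-derivative of
`-e^{-z cosh t} (z sinh t cosh (νt) + ν sinh (νt))`, which vanishes at `0` and at `∞`, `K` solves
the modified Bessel equation `z² K'' + z K' - (z² + ν²) K = 0`. The substitution `z = c xᵖ`,
`y = √x K(ν, z)` with `2pν = 1` turns it into `y'' = (cp)² x^{2p-2} y`; finally
`p = (β + 2)/2` and `c = 2√λ/(β + 2)` give `cp = √λ` and `2p - 2 = β`.
-/

open Set

/-- Modified Bessel function of the second kind (integral representation):
`K(ν, z) = ∫₀^∞ exp(−z cosh t) cosh(ν t) dt`. -/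
noncomputable def besselK (ν z : ℝ) : ℝ :=
  ∫ t in Set.Ioi (0 : ℝ), Real.exp (-z * Real.cosh t) * Real.cosh (ν * t)

open Real MeasureTheory Filter Topology Asymptotics

theorem cosh_le_exp_abs (x : ℝ) : cosh x ≤ exp |x| := by
  rw [← cosh_abs, cosh_eq]
  linarith [exp_le_exp.mpr (neg_le_self (abs_nonneg x))]

theorem abs_sinh_le_cosh (x : ℝ) : |sinh x| ≤ cosh x := by
  rw [abs_sinh, ← cosh_abs]
  exact (sinh_lt_cosh _).le

theorem tendsto_exp_mul_mul_exp_neg_mul_cosh {a : ℝ} (ha : 0 < a) (b : ℝ) :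
    Tendsto (fun t => exp (b * t) * exp (-a * cosh t)) atTop (𝓝 0) := by
  have hlim : Tendsto (fun t => exp t ^ b * exp (-(a / 2) * exp t)) atTop (𝓝 0) :=
    (tendsto_rpow_mul_exp_neg_mul_atTop_nhds_zero b (a / 2) (by positivity)).comp
      tendsto_exp_atTop
  refine squeeze_zero (fun t => by positivity) (fun t => ?_) hlim
  rw [← exp_mul, mul_comm t b]
  have : exp t / 2 ≤ cosh t := by rw [cosh_eq]; linarith [exp_pos (-t)]
  gcongr _ * exp ?_
  nlinarith

noncomputable def besselKIntegrand (ν z t : ℝ) : ℝ := exp (-z * cosh t) * cosh (ν * t)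

theorem isBigO_cosh_pow_mul_besselKIntegrand (k : ℕ) (ν : ℝ) {z : ℝ} (hz : 0 < z) :
    (fun t => cosh t ^ k * besselKIntegrand ν z t) =O[atTop] fun t => exp (-1 * t) := by
  set b : ℝ := k + |ν| + 1
  have hbound : (fun t => cosh t ^ k * besselKIntegrand ν z t) =O[atTop]
      fun t => exp (b * t) * exp (-z * cosh t) * exp (-1 * t) := by
    refine IsBigO.of_bound 1 ?_
    filter_upwards [eventually_ge_atTop 0] with t ht
    have hk : cosh t ^ k ≤ exp (k * t) := by
      rw [exp_nat_mul]
      exact pow_le_pow_left₀ (cosh_pos t).le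
        ((cosh_le_exp_abs t).trans_eq (by rw [abs_of_nonneg ht])) k
    have hν : cosh (ν * t) ≤ exp (|ν| * t) := by
      simpa [abs_mul, abs_of_nonneg ht] using cosh_le_exp_abs (ν * t)
    have hexp : exp (b * t) * exp (-z * cosh t) * exp (-1 * t)
        = exp (k * t) * (exp (-z * cosh t) * exp (|ν| * t)) := by
      simp only [← exp_add, b]; ring_nf
    rw [one_mul, besselKIntegrand, hexp, norm_of_nonneg (by positivity),
      norm_of_nonneg (by positivity)]
    gcongr
  refine hbound.trans ?_
  simpa using ((tendsto_exp_mul_mul_exp_neg_mul_cosh hz b).isBigO_one ℝ).mul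
    (isBigO_refl (fun t => exp (-1 * t)) atTop)

theorem integrableOn_cosh_pow_mul_besselKIntegrand (k : ℕ) (ν : ℝ) {z : ℝ} (hz : 0 < z) :
    IntegrableOn (fun t => cosh t ^ k * besselKIntegrand ν z t) (Ioi 0) :=
  integrable_of_isBigO_exp_neg one_pos
    (by unfold besselKIntegrand; fun_prop) (isBigO_cosh_pow_mul_besselKIntegrand k ν hz)

/-- `besselKMoment k ν` is `(-1) ^ k` times the `k`-th derivative of `besselK ν` on `(0, ∞)`. -/
noncomputable def besselKMoment (k : ℕ) (ν z : ℝ) : ℝ :=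
  ∫ t in Ioi 0, cosh t ^ k * besselKIntegrand ν z t

theorem besselKMoment_zero (ν : ℝ) : besselKMoment 0 ν = besselK ν := by
  ext z
  simp [besselKMoment, besselKIntegrand, besselK]

theorem hasDerivAt_besselKIntegrand (ν t z : ℝ) :
    HasDerivAt (fun z => besselKIntegrand ν z t) (-(cosh t * besselKIntegrand ν z t)) z := by
  have := (((hasDerivAt_neg' z).mul_const (cosh t)).exp).mul_const (cosh (ν * t))
  unfold besselKIntegrand
  exact this.congr_deriv (by ring)

theorem hasDerivAt_besselKMoment (k : ℕ) (ν : ℝ) {z : ℝ} (hz : 0 < z) :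
    HasDerivAt (besselKMoment k ν) (-besselKMoment (k + 1) ν z) z := by
  have hball : Metric.ball z (z / 2) ⊆ Ioi (z / 2) := fun w hw => by
    rw [Metric.mem_ball, Real.dist_eq] at hw
    exact show z / 2 < w by linarith [(abs_lt.mp hw).1]
  have key := hasDerivAt_integral_of_dominated_loc_of_deriv_le
    (μ := volume.restrict (Ioi 0)) (s := Metric.ball z (z / 2))
    (F := fun w t => cosh t ^ k * besselKIntegrand ν w t)
    (F' := fun w t => -(cosh t ^ (k + 1) * besselKIntegrand ν w t))
    (bound := fun t => cosh t ^ (k + 1) * besselKIntegrand ν (z / 2) t)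
    (Metric.ball_mem_nhds z (by positivity))
    (.of_forall fun w => by unfold besselKIntegrand; fun_prop)
    (integrableOn_cosh_pow_mul_besselKIntegrand k ν hz)
    (by unfold besselKIntegrand; fun_prop)
    (.of_forall fun t w hw => ?_)
    (integrableOn_cosh_pow_mul_besselKIntegrand (k + 1) ν (half_pos hz))
    (.of_forall fun t w _ => ?_)
  · rw [besselKMoment, ← integral_neg]
    exact key.2
  · have hw : z / 2 < w := hball hw
    rw [norm_neg, norm_of_nonneg (by unfold besselKIntegrand; positivity)]
    unfold besselKIntegrand
    gcongr _ * (exp ?_ * _)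
    nlinarith [one_le_cosh t]
  · exact ((hasDerivAt_besselKIntegrand ν t w).const_mul (cosh t ^ k)).congr_deriv (by ring)

theorem hasDerivAt_besselK (ν : ℝ) {z : ℝ} (hz : 0 < z) :
    HasDerivAt (besselK ν) (-besselKMoment 1 ν z) z :=
  besselKMoment_zero ν ▸ hasDerivAt_besselKMoment 0 ν hz

theorem besselK_ode (ν : ℝ) {z : ℝ} (hz : 0 < z) :
    z ^ 2 * besselKMoment 2 ν z - z * besselKMoment 1 ν z
      - (z ^ 2 + ν ^ 2) * besselK ν z = 0 := by
  rw [← besselKMoment_zero]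
  set I := besselKIntegrand ν z
  have hint (k : ℕ) := integrableOn_cosh_pow_mul_besselKIntegrand k ν hz
  set F : ℝ → ℝ := fun t => -(exp (-z * cosh t) * (z * sinh t * cosh (ν * t) + ν * sinh (ν * t)))
  set G : ℝ → ℝ := fun t => z ^ 2 * (cosh t ^ 2 * I t) - z * (cosh t ^ 1 * I t)
    - (z ^ 2 + ν ^ 2) * (cosh t ^ 0 * I t)
  have hFG (t : ℝ) : HasDerivAt F (G t) t := by
    have hcosh := (hasDerivAt_cosh t).const_mul (-z)
    have hνt := (hasDerivAt_id' t).const_mul ν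
    have := ((hcosh.exp).mul (((hasDerivAt_sinh t).const_mul z).mul
      ((hasDerivAt_cosh _).comp t hνt) |>.add (((hasDerivAt_sinh _).comp t hνt).const_mul ν))).neg
    refine this.congr_deriv ?_
    simp only [G, I, besselKIntegrand, Pi.mul_apply, Pi.add_apply, Function.comp_apply]
    linear_combination (z ^ 2 * exp (-z * cosh t) * cosh (ν * t)) * sinh_sq t
  have h2 := (hint 2).const_mul (z ^ 2)
  have h1 := (hint 1).const_mul z
  have hGint : IntegrableOn G (Ioi 0) := (h2.sub h1).sub ((hint 0).const_mul _)
  have hFint : IntegrableOn F (Ioi 0) := by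
    refine Integrable.mono' (((hint 1).const_mul z).add ((hint 0).const_mul |ν|))
      (by fun_prop) (.of_forall fun t => ?_)
    simp only [F, besselKIntegrand, norm_neg, norm_mul, norm_eq_abs, abs_exp, pow_one, pow_zero,
      one_mul]
    calc exp (-z * cosh t) * |z * sinh t * cosh (ν * t) + ν * sinh (ν * t)|
        ≤ exp (-z * cosh t) * (z * (cosh t * cosh (ν * t)) + |ν| * cosh (ν * t)) := by
          gcongr
          refine (abs_add_le _ _).trans (add_le_add ?_ ?_)
          · rw [abs_mul, abs_mul, abs_of_pos hz, abs_of_pos (cosh_pos _), mul_assoc]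
            gcongr
            exact abs_sinh_le_cosh t
          · rw [abs_mul]
            gcongr
            exact abs_sinh_le_cosh _
      _ = _ := by simp only [Pi.add_apply]; ring
  have hlim : Tendsto F atTop (𝓝 0) :=
    tendsto_zero_of_hasDerivAt_of_integrableOn_Ioi (fun t _ => hFG t) hGint hFint
  calc _ = ∫ t in Ioi 0, G t := by
        rw [integral_sub (f := fun t => z ^ 2 * (cosh t ^ 2 * I t) - z * (cosh t ^ 1 * I t))
          (h2.sub h1) ((hint 0).const_mul _), integral_sub h2 h1,
          integral_const_mul, integral_const_mul, integral_const_mul]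
        rfl
    _ = 0 - F 0 := integral_Ioi_of_hasDerivAt_of_tendsto' (fun t _ => hFG t) hGint hlim
    _ = 0 := by simp [F]

section Transform

variable {g w w' w'' : ℝ → ℝ} {ν p c x : ℝ}

theorem hasDerivAt_comp_const_mul_rpow {d : ℝ} (hx : 0 < x)
    (hg : HasDerivAt g d (c * x ^ p)) :
    HasDerivAt (fun x => g (c * x ^ p)) (d * (p * (c * x ^ p) / x)) x := by
  refine (hg.comp x ((hasDerivAt_rpow_const (Or.inl hx.ne')).const_mul c)).congr_deriv ?_
  rw [rpow_sub_one hx.ne']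
  ring

theorem hasDerivAt_sqrt_mul_comp_const_mul_rpow (hx : 0 < x)
    (hw : HasDerivAt w (w' (c * x ^ p)) (c * x ^ p)) :
    HasDerivAt (fun x => √x * w (c * x ^ p))
      ((w (c * x ^ p) / 2 + p * (c * x ^ p) * w' (c * x ^ p)) / √x) x := by
  refine ((hasDerivAt_sqrt hx.ne').mul (hasDerivAt_comp_const_mul_rpow hx hw)).congr_deriv ?_
  obtain ⟨s, hs, rfl⟩ : ∃ s > 0, x = s ^ 2 := ⟨√x, sqrt_pos.2 hx, (sq_sqrt hx.le).symm⟩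
  rw [sqrt_sq hs.le]
  field_simp

theorem hasDerivAt_comp_const_mul_rpow_div_sqrt (hx : 0 < x) (hν : 2 * p * ν = 1)
    (hw : HasDerivAt w (w' (c * x ^ p)) (c * x ^ p))
    (hw' : HasDerivAt w' (w'' (c * x ^ p)) (c * x ^ p))
    (hode : (c * x ^ p) ^ 2 * w'' (c * x ^ p) + (c * x ^ p) * w' (c * x ^ p)
      - ((c * x ^ p) ^ 2 + ν ^ 2) * w (c * x ^ p) = 0) :
    HasDerivAt (fun x => (w (c * x ^ p) / 2 + p * (c * x ^ p) * w' (c * x ^ p)) / √x)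
      ((c * p) ^ 2 * x ^ (2 * p - 2) * (√x * w (c * x ^ p))) x := by
  have hu : HasDerivAt (fun z => w z / 2 + p * z * w' z)
      (w' (c * x ^ p) / 2 + (p * w' (c * x ^ p) + p * (c * x ^ p) * w'' (c * x ^ p)))
      (c * x ^ p) :=
    (hw.div_const 2).add ((((hasDerivAt_id' _).const_mul p).mul hw').congr_deriv (by ring))
  refine ((hasDerivAt_comp_const_mul_rpow hx hu).div (hasDerivAt_sqrt hx.ne')
    (sqrt_ne_zero'.2 hx)).congr_deriv ?_
  rw [show 2 * p - 2 = p * 2 - 2 by ring, rpow_sub hx, rpow_mul hx.le, rpow_two, rpow_two,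
    show (c * p) ^ 2 * ((x ^ p) ^ 2 / x ^ 2) = p ^ 2 * (c * x ^ p) ^ 2 / x ^ 2 by ring]
  set z := c * x ^ p
  clear_value z
  obtain ⟨s, hs, rfl⟩ : ∃ s > 0, x = s ^ 2 := ⟨√x, sqrt_pos.2 hx, (sq_sqrt hx.le).symm⟩
  rw [sqrt_sq hs.le]
  field_simp
  linear_combination 4 * p ^ 2 * hode + (2 * p * ν + 1) * w z * hν

end Transform

theorem stmt4 (β lam : ℝ) (hβ : 0 < β) (hlam : 0 < lam) :
    ∃ y' : ℝ → ℝ,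
      (∀ x ∈ Ioi (0 : ℝ),
        HasDerivAt (fun x : ℝ =>
          Real.sqrt x *
            besselK (1 / (β + 2)) (2 * Real.sqrt lam / (β + 2) * x ^ ((β + 2) / 2)))
          (y' x) x) ∧
      (∀ x ∈ Ioi (0 : ℝ),
        HasDerivAt y'
          (lam * x ^ β *
            (Real.sqrt x *
              besselK (1 / (β + 2)) (2 * Real.sqrt lam / (β + 2) * x ^ ((β + 2) / 2))))
          x) := by
  set ν := 1 / (β + 2)
  set c := 2 * √lam / (β + 2)
  set p := (β + 2) / 2
  have hβ2 : 0 < β + 2 := by linarith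
  have hν : 2 * p * ν = 1 := by simp only [p, ν]; field_simp
  have hcp : c * p = √lam := by simp only [c, p]; field_simp
  have hz {x : ℝ} (hx : 0 < x) : 0 < c * x ^ p := by simp only [c]; positivity
  refine ⟨fun x => (besselK ν (c * x ^ p) / 2
    + p * (c * x ^ p) * -besselKMoment 1 ν (c * x ^ p)) / √x, fun x hx => ?_, fun x hx => ?_⟩
  · exact hasDerivAt_sqrt_mul_comp_const_mul_rpow (w' := fun z => -besselKMoment 1 ν z) hx
      (hasDerivAt_besselK ν (hz hx))
  · have := hasDerivAt_comp_const_mul_rpow_div_sqrt (w' := fun z => -besselKMoment 1 ν z)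
      (w'' := besselKMoment 2 ν) hx hν (hasDerivAt_besselK ν (hz hx))
      ((hasDerivAt_besselKMoment 1 ν (hz hx)).neg.congr_deriv (neg_neg _))
      (by linear_combination besselK_ode ν (hz hx))
    rwa [hcp, sq_sqrt hlam.le, show 2 * p - 2 = β by ring] at this
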